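/- arXiv:2105.12877 — 4 statements merged into one kernel-verified Lean document; each statement's English description precedes it below -/
import Mathlib

section
/- Suppose a Hermitian operator H on (ℂ^d)^{⊗n} has a decomposition H = Σ_{σ∈S_n} h_σ P(σ) with coefficients satisfying h_σ = −sgn(σ)·conj(h_σ) for all σ. Then K(H⊗I + I⊗H) = 0, where K = (1/n!) Σ_{σ} sgn(σ) P(σ)⊗P(σ). -/
open Matrix Kronecker

/-- The permutation representation of `S_n` on `(ℂ^d)^{⊗n}`, realized as a matrix acting on
the standard tensor-product basis indexed by functions `Fin n → Fin d`:
`P(σ)` sends the basis vector `e_g` to `e_{g ∘ σ⁻¹}`. -/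
noncomputable def permMat (d n : ℕ) (σ : Equiv.Perm (Fin n)) :
    Matrix (Fin n → Fin d) (Fin n → Fin d) ℂ :=
  Matrix.of fun f g => if f ∘ σ = g then 1 else 0

/-- `K = (1/n!) Σ_{σ ∈ S_n} sgn(σ) P(σ) ⊗ P(σ)` on the doubled space. -/
noncomputable def signProj (d n : ℕ) :
    Matrix ((Fin n → Fin d) × (Fin n → Fin d)) ((Fin n → Fin d) × (Fin n → Fin d)) ℂ :=
  ((n.factorial : ℂ)⁻¹) • ∑ σ : Equiv.Perm (Fin n),
    (((Equiv.Perm.sign σ : ℤ) : ℂ)) • (permMat d n σ ⊗ₖ permMat d n σ)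

lemma permMat_mul (d n : ℕ) (σ τ : Equiv.Perm (Fin n)) :
    permMat d n σ * permMat d n τ = permMat d n (σ * τ) := by
  ext f g
  simp only [permMat, Matrix.mul_apply, Matrix.of_apply, ite_mul, one_mul, zero_mul]
  rw [Finset.sum_ite_eq Finset.univ (f ∘ ⇑σ) (fun k => if k ∘ ⇑τ = g then (1:ℂ) else 0)]
  simp only [Finset.mem_univ, if_true]
  congr 1

lemma permMat_conjTranspose (d n : ℕ) (σ : Equiv.Perm (Fin n)) :
    (permMat d n σ)ᴴ = permMat d n σ⁻¹ := by
  ext f g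
  simp only [permMat, Matrix.conjTranspose_apply, Matrix.of_apply, apply_ite star, star_one,
    star_zero]
  congr 1
  rw [eq_iff_iff]
  constructor <;> intro hfg <;> rw [← hfg] <;> ext x <;> simp

lemma kronecker_sum' {ι l m : Type*} [Fintype ι] (s : Finset ι)
    (B : Matrix m m ℂ) (A : ι → Matrix l l ℂ) :
    B ⊗ₖ (∑ i ∈ s, A i) = ∑ i ∈ s, (B ⊗ₖ A i) := by
  ext ⟨a, b⟩ ⟨c, e⟩
  simp [Matrix.kroneckerMap_apply, Matrix.sum_apply, Finset.mul_sum]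

lemma sum_kronecker' {ι l m : Type*} [Fintype ι] (s : Finset ι)
    (A : ι → Matrix l l ℂ) (B : Matrix m m ℂ) :
    (∑ i ∈ s, A i) ⊗ₖ B = ∑ i ∈ s, (A i ⊗ₖ B) := by
  ext ⟨a, b⟩ ⟨c, e⟩
  simp [Matrix.kroneckerMap_apply, Matrix.sum_apply, Finset.sum_mul]

/-- If a Hermitian operator `H` on `(ℂ^d)^{⊗n}` has a decomposition `H = Σ_σ h_σ P(σ)` with
`h_σ = -sgn(σ)·conj(h_σ)` for all `σ`, then `K (H⊗I + I⊗H) = 0`. -/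
theorem signProj_annihilates (d n : ℕ) (h : Equiv.Perm (Fin n) → ℂ)
    (H : Matrix (Fin n → Fin d) (Fin n → Fin d) ℂ)
    (hdecomp : H = ∑ σ : Equiv.Perm (Fin n), h σ • permMat d n σ)
    (hHerm : Hᴴ = H)
    (hcoef : ∀ σ : Equiv.Perm (Fin n),
      h σ = -((Equiv.Perm.sign σ : ℤ) : ℂ) * (starRingEnd ℂ) (h σ)) :
    signProj d n * (H ⊗ₖ (1 : Matrix (Fin n → Fin d) (Fin n → Fin d) ℂ)
      + (1 : Matrix (Fin n → Fin d) (Fin n → Fin d) ℂ) ⊗ₖ H) = 0 := by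
  set P := permMat d n with hP
  set ε : Equiv.Perm (Fin n) → ℂ := fun σ => ((Equiv.Perm.sign σ : ℤ) : ℂ) with hε
  -- basic facts about ε
  have hεmul : ∀ σ τ, ε (σ * τ) = ε σ * ε τ := by
    intro σ τ; simp [hε]
  have hεinv : ∀ σ, ε σ⁻¹ = ε σ := by
    intro σ; simp [hε]
  have hεsq : ∀ σ, ε σ * ε σ = 1 := by
    intro σ
    rcases Int.units_eq_one_or (Equiv.Perm.sign σ) with hs | hs <;> simp [hε, hs]
  -- conjugate-transpose decomposition of H
  have hHconj : H = ∑ τ : Equiv.Perm (Fin n), (starRingEnd ℂ) (h τ) • P τ⁻¹ := by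
    conv_lhs => rw [← hHerm, hdecomp]
    rw [Matrix.conjTranspose_sum]
    refine Finset.sum_congr rfl fun τ _ => ?_
    rw [Matrix.conjTranspose_smul, permMat_conjTranspose]
    rfl
  -- key identity
  have hkey : ∀ ρ : Equiv.Perm (Fin n),
      (∑ τ : Equiv.Perm (Fin n), (ε τ * h τ) • P (ρ * τ⁻¹)) = -(P ρ * H) := by
    intro ρ
    have : P ρ * H = ∑ τ : Equiv.Perm (Fin n), (starRingEnd ℂ) (h τ) • P (ρ * τ⁻¹) := by
      conv_lhs => rw [hHconj]
      rw [Finset.mul_sum]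
      refine Finset.sum_congr rfl fun τ _ => ?_
      rw [Matrix.mul_smul, permMat_mul]
    rw [this, ← Finset.sum_neg_distrib]
    refine Finset.sum_congr rfl fun τ _ => ?_
    rw [← neg_smul]
    congr 1
    have := hcoef τ
    calc ε τ * h τ = ε τ * (-ε τ * (starRingEnd ℂ) (h τ)) := by rw [← this]
      _ = -(ε τ * ε τ) * (starRingEnd ℂ) (h τ) := by ring
      _ = -(starRingEnd ℂ) (h τ) := by rw [hεsq]; ring
  -- main computation
  rw [signProj, Matrix.smul_mul, Finset.sum_mul]
  have hterm : ∀ σ : Equiv.Perm (Fin n),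
      (ε σ • (P σ ⊗ₖ P σ)) * (H ⊗ₖ (1 : Matrix (Fin n → Fin d) (Fin n → Fin d) ℂ)
        + (1 : Matrix (Fin n → Fin d) (Fin n → Fin d) ℂ) ⊗ₖ H)
      = ε σ • ((P σ * H) ⊗ₖ P σ) + ε σ • (P σ ⊗ₖ (P σ * H)) := by
    intro σ
    rw [Matrix.smul_mul, mul_add, ← Matrix.mul_kronecker_mul, ← Matrix.mul_kronecker_mul,
      mul_one, smul_add]
  have hsplit : (∑ σ : Equiv.Perm (Fin n),
      (ε σ • (P σ ⊗ₖ P σ)) * (H ⊗ₖ (1 : Matrix (Fin n → Fin d) (Fin n → Fin d) ℂ)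
        + (1 : Matrix (Fin n → Fin d) (Fin n → Fin d) ℂ) ⊗ₖ H))
      = (∑ σ : Equiv.Perm (Fin n), ε σ • ((P σ * H) ⊗ₖ P σ))
        + ∑ σ : Equiv.Perm (Fin n), ε σ • (P σ ⊗ₖ (P σ * H)) := by
    rw [← Finset.sum_add_distrib]
    exact Finset.sum_congr rfl fun σ _ => hterm σ
  rw [hsplit]
  -- now show the two sums cancel
  have hcancel : (∑ σ : Equiv.Perm (Fin n), ε σ • ((P σ * H) ⊗ₖ P σ))
      = -∑ σ : Equiv.Perm (Fin n), ε σ • (P σ ⊗ₖ (P σ * H)) := by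
    have step1 : ∀ σ : Equiv.Perm (Fin n), ε σ • ((P σ * H) ⊗ₖ P σ)
        = ∑ τ : Equiv.Perm (Fin n), (ε σ * h τ) • (P (σ * τ) ⊗ₖ P σ) := by
      intro σ
      have : P σ * H = ∑ τ : Equiv.Perm (Fin n), h τ • P (σ * τ) := by
        conv_lhs => rw [hdecomp]
        rw [Finset.mul_sum]
        refine Finset.sum_congr rfl fun τ _ => ?_
        rw [Matrix.mul_smul, permMat_mul]
      rw [this, sum_kronecker', Finset.smul_sum]
      refine Finset.sum_congr rfl fun τ _ => ?_
      rw [Matrix.smul_kronecker, smul_smul]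
    calc (∑ σ : Equiv.Perm (Fin n), ε σ • ((P σ * H) ⊗ₖ P σ))
        = ∑ σ : Equiv.Perm (Fin n), ∑ τ : Equiv.Perm (Fin n),
            (ε σ * h τ) • (P (σ * τ) ⊗ₖ P σ) := Finset.sum_congr rfl fun σ _ => step1 σ
      _ = ∑ τ : Equiv.Perm (Fin n), ∑ σ : Equiv.Perm (Fin n),
            (ε σ * h τ) • (P (σ * τ) ⊗ₖ P σ) := Finset.sum_comm
      _ = ∑ τ : Equiv.Perm (Fin n), ∑ ρ : Equiv.Perm (Fin n),
            (ε (ρ * τ⁻¹) * h τ) • (P ρ ⊗ₖ P (ρ * τ⁻¹)) := by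
          refine Finset.sum_congr rfl fun τ _ => ?_
          rw [← Equiv.sum_comp (Equiv.mulRight τ⁻¹)
            (fun σ => (ε σ * h τ) • (P (σ * τ) ⊗ₖ P σ))]
          refine Finset.sum_congr rfl fun ρ _ => ?_
          simp only [Equiv.coe_mulRight]
          rw [inv_mul_cancel_right]
      _ = ∑ ρ : Equiv.Perm (Fin n), ∑ τ : Equiv.Perm (Fin n),
            (ε ρ * (ε τ * h τ)) • (P ρ ⊗ₖ (P ρ * P τ⁻¹)) := by
          rw [Finset.sum_comm]
          refine Finset.sum_congr rfl fun ρ _ => Finset.sum_congr rfl fun τ _ => ?_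
          rw [hεmul, hεinv, permMat_mul, mul_assoc]
      _ = ∑ ρ : Equiv.Perm (Fin n), ε ρ • (P ρ ⊗ₖ
            (∑ τ : Equiv.Perm (Fin n), (ε τ * h τ) • P (ρ * τ⁻¹))) := by
          refine Finset.sum_congr rfl fun ρ _ => ?_
          rw [kronecker_sum', Finset.smul_sum]
          refine Finset.sum_congr rfl fun τ _ => ?_
          rw [permMat_mul, Matrix.kronecker_smul, smul_smul]
      _ = -∑ σ : Equiv.Perm (Fin n), ε σ • (P σ ⊗ₖ (P σ * H)) := by
          rw [← Finset.sum_neg_distrib]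
          refine Finset.sum_congr rfl fun ρ _ => ?_
          rw [hkey ρ, ← smul_neg]
          congr 1
          ext ⟨a, b⟩ ⟨c, e⟩
          simp [Matrix.kroneckerMap_apply]
  rw [hcancel, neg_add_cancel, smul_zero]
end

section
/- In the case n = d², f_sgn is identically zero on (ℂ^d)^{⊗n} if and only if d(d−1)/2 is odd. -/
open Matrix

/-- `f_sgn[ψ] = (1/n!) Σ_{σ ∈ S_n} sgn(σ) ⟨ψ|P(σ)|ψ⟩²`. -/
noncomputable def fsgn (d n : ℕ) (ψ : (Fin n → Fin d) → ℂ) : ℂ :=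
  ((n.factorial : ℂ)⁻¹) * ∑ σ : Equiv.Perm (Fin n),
    ((Equiv.Perm.sign σ : ℤ) : ℂ) * (star ψ ⬝ᵥ (permMat d n σ).mulVec ψ) ^ 2

noncomputable section

open Equiv

def iota (d : ℕ) : Fin (d ^ 2) ≃ Fin d × Fin d :=
  (finCongr (pow_two d)).trans finProdFinEquiv.symm

def sgnE (d : ℕ) (e : Fin (d ^ 2) ≃ Fin d × Fin d) : ℤˣ :=
  Equiv.Perm.sign (e.trans (iota d).symm)

def Bq (d : ℕ) (ψ : (Fin (d ^ 2) → Fin d) → ℂ) : ℂ :=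
  ∑ e : Fin (d ^ 2) ≃ Fin d × Fin d,
    ((sgnE d e : ℤ) : ℂ) * (ψ (Prod.fst ∘ ⇑e) * ψ (Prod.snd ∘ ⇑e))

lemma sum_sign_zero (d : ℕ) (ψ : (Fin (d ^ 2) → Fin d) → ℂ) (f g : Fin (d ^ 2) → Fin d)
    (h : ¬ Function.Injective (fun i => (f i, g i))) :
    ∑ σ : Equiv.Perm (Fin (d ^ 2)),
      ((Equiv.Perm.sign σ : ℤ) : ℂ) * (ψ (f ∘ σ) * ψ (g ∘ σ)) = 0 := by
  simp only [Function.Injective, not_forall] at h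
  obtain ⟨a, b, hab, hne⟩ := h
  have hf : f a = f b := congrArg Prod.fst hab
  have hg : g a = g b := congrArg Prod.snd hab
  apply Finset.sum_ninvolution (g := fun σ => σ.trans (Equiv.swap a b))
  · intro σ
    have h1 : f ∘ ⇑(σ.trans (Equiv.swap a b)) = f ∘ ⇑σ := by
      funext i
      simp only [Function.comp_apply, Equiv.trans_apply]
      rcases eq_or_ne (σ i) a with h | h
      · simp [h, Equiv.swap_apply_left, hf]
      rcases eq_or_ne (σ i) b with h' | h'
      · simp [h', Equiv.swap_apply_right, hf.symm]
      · rw [Equiv.swap_apply_of_ne_of_ne h h']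
    have h2 : σ.trans (Equiv.swap a b) = (Equiv.swap a b) * σ := rfl
    have h3 : g ∘ ⇑(σ.trans (Equiv.swap a b)) = g ∘ ⇑σ := by
      funext i
      simp only [Function.comp_apply, Equiv.trans_apply]
      rcases eq_or_ne (σ i) a with h | h
      · simp [h, Equiv.swap_apply_left, hg]
      rcases eq_or_ne (σ i) b with h' | h'
      · simp [h', Equiv.swap_apply_right, hg.symm]
      · rw [Equiv.swap_apply_of_ne_of_ne h h']
    rw [h1, h3, h2, Equiv.Perm.sign_mul, Equiv.Perm.sign_swap hne]
    push_cast
    ring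
  · intro σ _
    intro hc
    have h2 : (σ.trans (Equiv.swap a b)) (σ.symm a) = σ (σ.symm a) := by rw [hc]
    simp only [Equiv.trans_apply, Equiv.apply_symm_apply, Equiv.swap_apply_left] at h2
    exact hne h2.symm
  · intro σ; exact Finset.mem_univ _
  · intro σ
    ext i
    simp [Equiv.swap_apply_self]

lemma sum_sign_B (d : ℕ) (ψ : (Fin (d ^ 2) → Fin d) → ℂ) (f g : Fin (d ^ 2) → Fin d)
    (e0 : Fin (d ^ 2) ≃ Fin d × Fin d)
    (hf : Prod.fst ∘ ⇑e0 = f) (hg : Prod.snd ∘ ⇑e0 = g) :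
    ∑ σ : Equiv.Perm (Fin (d ^ 2)),
      ((Equiv.Perm.sign σ : ℤ) : ℂ) * (ψ (f ∘ σ) * ψ (g ∘ σ))
      = ((sgnE d e0 : ℤ) : ℂ) * Bq d ψ := by
  rw [Bq, Finset.mul_sum]
  have hbij : Function.Bijective (fun σ : Equiv.Perm (Fin (d ^ 2)) => σ.trans e0) := by
    constructor
    · intro σ τ h
      ext i
      have h2 := Equiv.ext_iff.mp h i
      simp only [Equiv.trans_apply] at h2
      exact congrArg Fin.val (e0.injective h2)
    · intro e
      exact ⟨e.trans e0.symm, Equiv.ext fun i => by simp⟩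
  refine Fintype.sum_bijective _ hbij _ _ ?_
  intro σ
  have hs : sgnE d (σ.trans e0) = sgnE d e0 * Equiv.Perm.sign σ := by
    rw [sgnE, Equiv.trans_assoc]
    have : σ.trans (e0.trans (iota d).symm) = (e0.trans (iota d).symm) * σ := rfl
    rw [this, Equiv.Perm.sign_mul, sgnE]
  have hu : ((sgnE d e0 : ℤ) : ℂ) * ((sgnE d e0 : ℤ) : ℂ) = 1 := by
    rcases Int.units_eq_one_or (sgnE d e0) with h | h <;> simp [h]
  have hf' : Prod.fst ∘ ⇑(σ.trans e0) = f ∘ ⇑σ := by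
    funext i; exact congrFun hf (σ i)
  have hg' : Prod.snd ∘ ⇑(σ.trans e0) = g ∘ ⇑σ := by
    funext i; exact congrFun hg (σ i)
  rw [hf', hg', hs]
  push_cast
  linear_combination (-(ψ (f ∘ ⇑σ) * ψ (g ∘ ⇑σ) * ((Equiv.Perm.sign σ : ℤ):ℂ))) * hu

lemma sum_pairs (d : ℕ) (F : (Fin (d ^ 2) → Fin d) → (Fin (d ^ 2) → Fin d) → ℂ)
    (h0 : ∀ f g, ¬ Function.Injective (fun i => (f i, g i)) → F f g = 0) :
    ∑ f : Fin (d ^ 2) → Fin d, ∑ g : Fin (d ^ 2) → Fin d, F f g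
      = ∑ e : Fin (d ^ 2) ≃ Fin d × Fin d, F (Prod.fst ∘ ⇑e) (Prod.snd ∘ ⇑e) := by
  classical
  have hcard : Fintype.card (Fin (d ^ 2)) = Fintype.card (Fin d × Fin d) := by
    simp [pow_two]
  have hb : Function.Bijective (fun h : Fin (d ^ 2) → Fin d × Fin d =>
      ((Prod.fst ∘ h, Prod.snd ∘ h) : _ × _)) := by
    constructor
    · intro h h' hh
      funext i
      have h1 := congrFun (congrArg Prod.fst hh) i
      have h2 := congrFun (congrArg Prod.snd hh) i
      exact Prod.ext h1 h2
    · rintro ⟨f, g⟩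
      exact ⟨fun i => (f i, g i), rfl⟩
  have e1 : ∑ h : Fin (d ^ 2) → Fin d × Fin d, F (Prod.fst ∘ h) (Prod.snd ∘ h)
      = ∑ p : ((Fin (d ^ 2) → Fin d) × (Fin (d ^ 2) → Fin d)), F p.1 p.2 :=
    Fintype.sum_bijective _ hb _ _ (fun h => rfl)
  have e2 : ∑ p : ((Fin (d ^ 2) → Fin d) × (Fin (d ^ 2) → Fin d)), F p.1 p.2
      = ∑ f : Fin (d ^ 2) → Fin d, ∑ g : Fin (d ^ 2) → Fin d, F f g := by
    exact Fintype.sum_prod_type _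
  rw [← e2, ← e1]
  have himage : ∑ h : Fin (d ^ 2) → Fin d × Fin d, F (Prod.fst ∘ h) (Prod.snd ∘ h)
      = ∑ h ∈ Finset.univ.image (fun e : Fin (d ^ 2) ≃ Fin d × Fin d => ⇑e),
          F (Prod.fst ∘ h) (Prod.snd ∘ h) := by
    refine (Finset.sum_subset (Finset.subset_univ _) ?_).symm
    intro h _ hnot
    apply h0
    intro hinj
    have hinj' : Function.Injective h := by
      intro a b hab
      apply hinj
      simp [hab]
    have hbij : Function.Bijective h :=
      (Fintype.bijective_iff_injective_and_card h).mpr ⟨hinj', hcard⟩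
    exact hnot (Finset.mem_image.mpr ⟨Equiv.ofBijective h hbij, Finset.mem_univ _, rfl⟩)
  rw [himage, Finset.sum_image]
  intro e _ e' _ h
  exact Equiv.coe_fn_injective h

lemma fsgn_eq (d : ℕ) (ψ : (Fin (d ^ 2) → Fin d) → ℂ) :
    fsgn d (d ^ 2) ψ = (((d ^ 2).factorial : ℂ))⁻¹ * (Bq d (star ψ) * Bq d ψ) := by
  rw [fsgn]
  congr 1
  have hdot : ∀ σ : Equiv.Perm (Fin (d ^ 2)),
      star ψ ⬝ᵥ (permMat d (d ^ 2) σ).mulVec ψ = ∑ f, star (ψ f) * ψ (f ∘ σ) := by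
    intro σ
    simp [dotProduct, Matrix.mulVec, permMat, ite_mul, Finset.sum_ite_eq]
  have step1 : ∑ σ : Equiv.Perm (Fin (d ^ 2)),
      ((Equiv.Perm.sign σ : ℤ) : ℂ) * (star ψ ⬝ᵥ (permMat d (d ^ 2) σ).mulVec ψ) ^ 2
      = ∑ f : Fin (d ^ 2) → Fin d, ∑ g : Fin (d ^ 2) → Fin d,
          (star (ψ f) * star (ψ g) *
            ∑ σ : Equiv.Perm (Fin (d ^ 2)),
              ((Equiv.Perm.sign σ : ℤ) : ℂ) * (ψ (f ∘ σ) * ψ (g ∘ σ))) := by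
    simp_rw [hdot, pow_two, Finset.sum_mul_sum, Finset.mul_sum]
    rw [Finset.sum_comm]
    refine Finset.sum_congr rfl fun f _ => ?_
    rw [Finset.sum_comm]
    exact Finset.sum_congr rfl fun g _ => Finset.sum_congr rfl fun σ _ => by ring
  rw [step1, sum_pairs d _ (fun f g h => by rw [sum_sign_zero d ψ f g h, mul_zero])]
  rw [Bq, Finset.sum_mul]
  refine Finset.sum_congr rfl fun e _ => ?_
  rw [sum_sign_B d ψ _ _ e rfl rfl]
  simp only [Pi.star_apply]
  ring

def swapPerm (d : ℕ) : Equiv.Perm (Fin (d ^ 2)) :=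
  ((iota d).trans (Equiv.prodComm (Fin d) (Fin d))).trans (iota d).symm

lemma Bq_swap (d : ℕ) (ψ : (Fin (d ^ 2) → Fin d) → ℂ) :
    Bq d ψ = ((Equiv.Perm.sign (swapPerm d) : ℤ) : ℂ) * Bq d ψ := by
  have hE : Function.Bijective
      (fun e : Fin (d ^ 2) ≃ Fin d × Fin d => e.trans (Equiv.prodComm (Fin d) (Fin d))) := by
    constructor
    · intro e e' h
      refine Equiv.ext fun i => ?_
      have h2 := Equiv.ext_iff.mp h i
      simp only [Equiv.trans_apply] at h2
      exact (Equiv.prodComm (Fin d) (Fin d)).injective h2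
    · intro e
      exact ⟨e.trans (Equiv.prodComm (Fin d) (Fin d)).symm, Equiv.ext fun i => by simp⟩
  nth_rewrite 1 [Bq]
  rw [Bq, Finset.mul_sum]
  refine Fintype.sum_bijective _ hE _ _ fun e => ?_
  have hs : sgnE d (e.trans (Equiv.prodComm (Fin d) (Fin d)))
      = Equiv.Perm.sign (swapPerm d) * sgnE d e := by
    have hperm : (e.trans (Equiv.prodComm (Fin d) (Fin d))).trans (iota d).symm
        = (swapPerm d) * (e.trans (iota d).symm) := by
      apply Equiv.ext
      intro i
      simp [swapPerm, Equiv.Perm.mul_def]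
    rw [sgnE, hperm, Equiv.Perm.sign_mul, sgnE]
  have hf : Prod.fst ∘ ⇑(e.trans (Equiv.prodComm (Fin d) (Fin d))) = Prod.snd ∘ ⇑e := by
    funext i; simp
  have hg : Prod.snd ∘ ⇑(e.trans (Equiv.prodComm (Fin d) (Fin d))) = Prod.fst ∘ ⇑e := by
    funext i; simp
  rw [hf, hg, hs]
  have hu : ((Equiv.Perm.sign (swapPerm d) : ℤ) : ℂ) * ((Equiv.Perm.sign (swapPerm d) : ℤ) : ℂ)
      = 1 := by
    rcases Int.units_eq_one_or (Equiv.Perm.sign (swapPerm d)) with h | h <;> simp [h]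
  push_cast
  linear_combination (-(((sgnE d e : ℤ) : ℂ) * ψ (Prod.fst ∘ ⇑e) * ψ (Prod.snd ∘ ⇑e))) * hu

lemma sign_swapPerm (d : ℕ) :
    Equiv.Perm.sign (swapPerm d) = (-1 : ℤˣ) ^ (d * (d - 1) / 2) := by
  have h1 : swapPerm d = ((iota d).symm).permCongr (Equiv.prodComm (Fin d) (Fin d)) := by
    apply Equiv.ext
    intro i
    simp [swapPerm, Equiv.permCongr_apply]
  rw [h1, Equiv.Perm.sign_permCongr]
  rcases lt_or_ge d 2 with hd | hd
  · interval_cases d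
    · simp [Subsingleton.elim (Equiv.prodComm (Fin 0) (Fin 0)) 1]
    · simp [Subsingleton.elim (Equiv.prodComm (Fin 1) (Fin 1)) 1]
  · set pc : Equiv.Perm (Fin d × Fin d) := Equiv.prodComm (Fin d) (Fin d) with hpc
    have hsq : pc ^ 2 = 1 := by
      rw [pow_two]
      apply Equiv.ext
      intro x
      simp [hpc, Equiv.Perm.mul_apply]
    have hne : pc ≠ 1 := by
      intro h
      have h2 := Equiv.ext_iff.mp h ((⟨0, by omega⟩ : Fin d), (⟨1, by omega⟩ : Fin d))
      simp only [hpc, Equiv.prodComm_apply, Prod.swap_prod_mk, Equiv.Perm.one_apply,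
        Prod.mk.injEq, Fin.mk.injEq] at h2
      omega
    have horder : orderOf pc = 2 := orderOf_eq_prime hsq hne
    have hall : ∀ a ∈ pc.cycleType, a = 2 := by
      intro a ha
      have hdvd : a ∣ 2 := horder ▸ Equiv.Perm.lcm_cycleType pc ▸ Multiset.dvd_lcm ha
      have h2a := Equiv.Perm.two_le_of_mem_cycleType ha
      have := Nat.le_of_dvd (by norm_num) hdvd
      omega
    have hrep : pc.cycleType = Multiset.replicate (Multiset.card pc.cycleType) 2 :=
      Multiset.eq_replicate_card.mpr hall
    have hsupp : pc.support = Finset.univ.offDiag := by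
      ext ⟨a, b⟩
      simp only [Equiv.Perm.mem_support, hpc, Equiv.prodComm_apply, Prod.swap_prod_mk,
        Finset.mem_offDiag, Finset.mem_univ, true_and, Ne, Prod.mk.injEq, not_and]
      constructor
      · intro h hab
        exact h hab.symm hab
      · intro h _
        exact h
    have hcardsupp : pc.support.card = d * d - d := by
      rw [hsupp, Finset.offDiag_card]
      simp
    have hsum : pc.cycleType.sum = d * d - d := by
      rw [Equiv.Perm.sum_cycleType, hcardsupp]
    have h2c : 2 * Multiset.card pc.cycleType = d * d - d := by
      rw [← hsum]
      conv_rhs => rw [hrep]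
      simp [Multiset.sum_replicate, mul_comm]
    have hdd : d * (d - 1) = d * d - d := by
      obtain ⟨n, rfl⟩ : ∃ n, d = n + 1 := ⟨d - 1, by omega⟩
      rw [Nat.add_sub_cancel, Nat.mul_succ, Nat.add_sub_cancel]
    have hc : Multiset.card pc.cycleType = d * (d - 1) / 2 := by
      rw [hdd, ← h2c, Nat.mul_div_cancel_left _ (by norm_num)]
    rw [Equiv.Perm.sign_of_cycleType, hsum, ← h2c, ← hc]
    rw [pow_add, pow_mul]
    norm_num

def f0 (d : ℕ) : Fin (d ^ 2) → Fin d := fun i => (iota d i).1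
def g0 (d : ℕ) : Fin (d ^ 2) → Fin d := fun i => (iota d i).2

def psi0 (d : ℕ) : (Fin (d ^ 2) → Fin d) → ℂ :=
  fun h => (if h = f0 d then 1 else 0) + (if h = g0 d then 1 else 0)

lemma star_psi0 (d : ℕ) : star (psi0 d) = psi0 d := by
  funext h
  simp only [Pi.star_apply, psi0, star_add]
  congr 1 <;> split <;> simp

lemma hf0g0 {d : ℕ} (hd : 2 ≤ d) : f0 d ≠ g0 d := by
  intro h
  have hi := congrFun h ((iota d).symm ((⟨0, by omega⟩ : Fin d), (⟨1, by omega⟩ : Fin d)))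
  simp only [f0, g0, Equiv.apply_symm_apply] at hi
  exact absurd (congrArg Fin.val hi) (by simp)

lemma Bq_psi0 {d : ℕ} (hd : 2 ≤ d) :
    Bq d (psi0 d) = 1 + ((Equiv.Perm.sign (swapPerm d) : ℤ) : ℂ) := by
  classical
  set e1 : Fin (d ^ 2) ≃ Fin d × Fin d := iota d with he1
  set e2 : Fin (d ^ 2) ≃ Fin d × Fin d := (iota d).trans (Equiv.prodComm (Fin d) (Fin d))
    with he2
  have hfe1 : Prod.fst ∘ ⇑e1 = f0 d := rfl
  have hge1 : Prod.snd ∘ ⇑e1 = g0 d := rfl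
  have hfe2 : Prod.fst ∘ ⇑e2 = g0 d := rfl
  have hge2 : Prod.snd ∘ ⇑e2 = f0 d := rfl
  have hne12 : e1 ≠ e2 := by
    intro h
    have hi := Equiv.ext_iff.mp h ((iota d).symm ((⟨0, by omega⟩ : Fin d), (⟨1, by omega⟩ : Fin d)))
    simp only [he1, he2, Equiv.trans_apply, Equiv.apply_symm_apply, Equiv.prodComm_apply,
      Prod.swap_prod_mk, Prod.mk.injEq, Fin.mk.injEq] at hi
    omega
  have hpsif : psi0 d (f0 d) = 1 := by
    simp [psi0, hf0g0 hd]
  have hpsig : psi0 d (g0 d) = 1 := by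
    simp [psi0, (hf0g0 hd).symm, Ne.symm (hf0g0 hd)]
  have hzero : ∀ e : Fin (d ^ 2) ≃ Fin d × Fin d, e ∉ ({e1, e2} : Finset _) →
      ((sgnE d e : ℤ) : ℂ) * (psi0 d (Prod.fst ∘ ⇑e) * psi0 d (Prod.snd ∘ ⇑e)) = 0 := by
    intro e he
    simp only [Finset.mem_insert, Finset.mem_singleton, not_or] at he
    obtain ⟨hne1, hne2⟩ := he
    -- it suffices that one of the psi0 factors vanishes
    rcases eq_or_ne (Prod.fst ∘ ⇑e) (f0 d) with hf | hf
    · rcases eq_or_ne (Prod.snd ∘ ⇑e) (g0 d) with hg | hg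
      · refine absurd (Equiv.ext fun i => ?_) hne1
        have hei : e i = ((Prod.fst ∘ ⇑e) i, (Prod.snd ∘ ⇑e) i) := rfl
        rw [hei, hf, hg]; rfl
      · rcases eq_or_ne (Prod.snd ∘ ⇑e) (f0 d) with hg' | hg'
        · -- e i = (f0 i, f0 i), contradicts injectivity
          exfalso
          have hx : e ((iota d).symm ((⟨0, by omega⟩ : Fin d), (⟨0, by omega⟩ : Fin d)))
              = e ((iota d).symm ((⟨0, by omega⟩ : Fin d), (⟨1, by omega⟩ : Fin d))) := by
            apply Prod.ext
            · rw [show ∀ x, (e x).1 = f0 d x from fun x => congrFun hf x,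
                show ∀ x, (e x).1 = f0 d x from fun x => congrFun hf x]
              simp [f0]
            · rw [show ∀ x, (e x).2 = f0 d x from fun x => congrFun hg' x,
                show ∀ x, (e x).2 = f0 d x from fun x => congrFun hg' x]
              simp [f0]
          have h3 := (iota d).symm.injective (e.injective hx)
          exact absurd (congrArg Prod.snd h3) (by simp)
        · simp [psi0, hg, hg', mul_comm]
    · rcases eq_or_ne (Prod.fst ∘ ⇑e) (g0 d) with hf' | hf'
      · rcases eq_or_ne (Prod.snd ∘ ⇑e) (f0 d) with hg | hg
        · refine absurd (Equiv.ext fun i => ?_) hne2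
          have hei : e i = ((Prod.fst ∘ ⇑e) i, (Prod.snd ∘ ⇑e) i) := rfl
          rw [hei, hf', hg]; rfl
        · rcases eq_or_ne (Prod.snd ∘ ⇑e) (g0 d) with hg' | hg'
          · exfalso
            have hx : e ((iota d).symm ((⟨0, by omega⟩ : Fin d), (⟨0, by omega⟩ : Fin d)))
                = e ((iota d).symm ((⟨1, by omega⟩ : Fin d), (⟨0, by omega⟩ : Fin d))) := by
              apply Prod.ext
              · rw [show ∀ x, (e x).1 = g0 d x from fun x => congrFun hf' x,
                  show ∀ x, (e x).1 = g0 d x from fun x => congrFun hf' x]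
                simp [g0]
              · rw [show ∀ x, (e x).2 = g0 d x from fun x => congrFun hg' x,
                  show ∀ x, (e x).2 = g0 d x from fun x => congrFun hg' x]
                simp [g0]
            have h3 := (iota d).symm.injective (e.injective hx)
            exact absurd (congrArg Prod.fst h3) (by simp)
          · simp [psi0, hg, hg', mul_comm]
      · simp [psi0, hf, hf']
  rw [Bq]
  rw [← Finset.sum_subset (Finset.subset_univ ({e1, e2} : Finset _))
    (fun e _ he => hzero e he)]
  rw [Finset.sum_pair hne12]
  have hsgne1 : sgnE d e1 = 1 := by
    rw [sgnE, he1, Equiv.self_trans_symm, ← Equiv.Perm.one_def, Equiv.Perm.sign_one]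
  have hsgne2 : sgnE d e2 = Equiv.Perm.sign (swapPerm d) := rfl
  rw [hfe1, hge1, hfe2, hge2, hsgne1, hsgne2, hpsif, hpsig]
  push_cast
  ring

lemma fsgn_one : fsgn 1 (1 ^ 2) (fun _ => (1 : ℂ)) = 1 := by
  haveI hsub : Subsingleton (Fin (1 ^ 2)) := ⟨fun a b => Fin.ext (by omega)⟩
  rw [fsgn_eq]
  have hstar : star (fun _ : Fin (1 ^ 2) → Fin 1 => (1 : ℂ)) = fun _ => (1 : ℂ) := by
    funext h; simp
  rw [hstar]
  have hB : Bq 1 (fun _ => (1 : ℂ)) = 1 := by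
    rw [Bq]
    have h1 : ∀ e : Fin (1 ^ 2) ≃ Fin 1 × Fin 1,
        ((sgnE 1 e : ℤ) : ℂ) * ((1 : ℂ) * 1) = 1 := by
      intro e
      have he : e.trans (iota 1).symm = 1 :=
        Equiv.ext fun i => Subsingleton.elim _ _
      rw [sgnE, he, Equiv.Perm.sign_one]
      norm_num
    rw [Finset.sum_congr rfl fun e _ => h1 e, Finset.sum_const,
      Finset.card_univ, Fintype.card_equiv (iota 1)]
    simp
  rw [hB]
  norm_num

end

/-- For `n = d²`, `f_sgn` is identically zero on `(ℂ^d)^{⊗n}` iff `d(d−1)/2` is odd. -/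
theorem fsgn_identically_zero_iff (d : ℕ) (hd : 1 ≤ d) :
    (∀ ψ : (Fin (d ^ 2) → Fin d) → ℂ, fsgn d (d ^ 2) ψ = 0) ↔ Odd (d * (d - 1) / 2) := by
  constructor
  · intro hall
    by_contra hodd
    rw [Nat.not_odd_iff_even] at hodd
    have hsign : Equiv.Perm.sign (swapPerm d) = 1 := by
      rw [sign_swapPerm]
      exact Even.neg_one_pow hodd
    rcases eq_or_lt_of_le hd with h1 | h2
    · obtain rfl : d = 1 := h1.symm
      have := hall (fun _ => 1)
      rw [fsgn_one] at this
      exact one_ne_zero this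
    · have hd2 : 2 ≤ d := h2
      have hzero := hall (psi0 d)
      rw [fsgn_eq, star_psi0, Bq_psi0 hd2, hsign] at hzero
      have hfac : (((d ^ 2).factorial : ℂ)) ≠ 0 :=
        Nat.cast_ne_zero.mpr (Nat.factorial_ne_zero _)
      rw [mul_eq_zero] at hzero
      rcases hzero with h | h
      · exact (inv_ne_zero hfac) h
      · norm_num at h
  · intro hodd ψ
    have hsign : Equiv.Perm.sign (swapPerm d) = -1 := by
      rw [sign_swapPerm]
      exact Odd.neg_one_pow hodd
    have hB : Bq d ψ = 0 := by
      have h := Bq_swap d ψ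
      rw [hsign] at h
      have h2 : (2 : ℂ) * Bq d ψ = 0 := by
        push_cast at h
        linear_combination h
      exact (mul_eq_zero.mp h2).resolve_left two_ne_zero
    rw [fsgn_eq, hB, mul_zero, mul_zero]
end

section
/- For the fermionic swap P^f_{ab} = I − (c_a† − c_b†)(c_a − c_b), one has e^{−iθ P^f_{ab}} c_j† e^{iθ P^f_{ab}} = e^{iθ}(cos θ · c_j† − i sin θ · c_{σ_{ab}(j)}†) for all j and all real θ. -/
open Matrix

/-!
Write `A = c_a† - c_b†` and `B = c_a - c_b`, so `P = 1 - A B`. The CAR give `A² = 0` and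
`A B + B A = 2`, hence `P A = -A` and `P² = 1`, so `exp (iθ P) = cos θ + i sin θ P`. They also
give `[c_j†, P] = A (δ_{aj} - δ_{bj}) = c_j† - c_{σ j}†`, and with `P A = -A` this yields
`P c_j† P = c_{σ j}†`. Expanding `(cos θ - i sin θ P) c_j† (cos θ + i sin θ P)` with these two
relations gives the formula. Only the anticommutation relations enter, so below `d i` stands for
`c_i†` in an arbitrary ring.
-/
section FermiSwap

variable {R ι : Type*} [Ring R] {c d : ι → R} {a b : ι}

def fermiSwap (c d : ι → R) (a b : ι) : R := 1 - (d a - d b) * (c a - c b)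

theorem sub_mul_self_eq_zero_of_anticomm [IsAddTorsionFree R]
    (hdd : ∀ i j, d i * d j + d j * d i = 0) (a b : ι) :
    (d a - d b) * (d a - d b) = 0 := by
  have hsq : ∀ i, d i * d i = 0 := fun i =>
    two_nsmul_eq_zero.mp (by rw [two_nsmul]; exact hdd i i)
  calc (d a - d b) * (d a - d b) = d a * d a + d b * d b - (d a * d b + d b * d a) := by
        noncomm_ring
    _ = 0 := by rw [hsq, hsq, hdd, add_zero, sub_zero]

variable [DecidableEq ι]

theorem sub_anticomm_sub_eq_two (hcd : ∀ i j, c i * d j + d j * c i = if i = j then 1 else 0)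
    (hab : a ≠ b) :
    (c a - c b) * (d a - d b) + (d a - d b) * (c a - c b) = 2 := by
  calc (c a - c b) * (d a - d b) + (d a - d b) * (c a - c b)
      = (c a * d a + d a * c a) + (c b * d b + d b * c b)
        - (c a * d b + d b * c a) - (c b * d a + d a * c b) := by noncomm_ring
    _ = 2 := by simp [hcd, hab, hab.symm, one_add_one_eq_two]

theorem fermiSwap_mul_sub [IsAddTorsionFree R]
    (hcd : ∀ i j, c i * d j + d j * c i = if i = j then 1 else 0)
    (hdd : ∀ i j, d i * d j + d j * d i = 0) (hab : a ≠ b) :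
    fermiSwap c d a b * (d a - d b) = -(d a - d b) := by
  have hA := sub_mul_self_eq_zero_of_anticomm hdd a b
  have hAB := sub_anticomm_sub_eq_two hcd hab
  calc fermiSwap c d a b * (d a - d b)
      = (d a - d b) - (d a - d b) * ((c a - c b) * (d a - d b)) := by
        unfold fermiSwap; noncomm_ring
    _ = -(d a - d b) := by
        rw [eq_sub_of_add_eq hAB, mul_sub, ← mul_assoc, hA, zero_mul, sub_zero, mul_two]
        abel

theorem fermiSwap_mul_self [IsAddTorsionFree R]
    (hcd : ∀ i j, c i * d j + d j * c i = if i = j then 1 else 0)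
    (hdd : ∀ i j, d i * d j + d j * d i = 0) (hab : a ≠ b) :
    fermiSwap c d a b * fermiSwap c d a b = 1 := by
  calc fermiSwap c d a b * fermiSwap c d a b
      = fermiSwap c d a b * (1 - (d a - d b) * (c a - c b)) := rfl
    _ = 1 := by
        rw [mul_sub, mul_one, ← mul_assoc, fermiSwap_mul_sub hcd hdd hab, fermiSwap]
        noncomm_ring

theorem sub_mul_ite_sub_ite (hab : a ≠ b) (j : ι) :
    (d a - d b) * ((if a = j then 1 else 0) - (if b = j then 1 else 0)) =
      d j - d (Equiv.swap a b j) := by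
  rcases eq_or_ne a j with rfl | haj
  · simp [hab.symm]
  rcases eq_or_ne b j with rfl | hbj
  · simp [haj]
  simp [haj, hbj, Equiv.swap_apply_of_ne_of_ne haj.symm hbj.symm]

theorem mul_fermiSwap_sub_fermiSwap_mul
    (hcd : ∀ i j, c i * d j + d j * c i = if i = j then 1 else 0)
    (hdd : ∀ i j, d i * d j + d j * d i = 0) (hab : a ≠ b) (j : ι) :
    d j * fermiSwap c d a b - fermiSwap c d a b * d j = d j - d (Equiv.swap a b j) := by
  calc d j * fermiSwap c d a b - fermiSwap c d a b * d j
      = (d a - d b) * ((c a * d j + d j * c a) - (c b * d j + d j * c b))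
        - (d a * d j + d j * d a - (d b * d j + d j * d b)) * (c a - c b) := by
        unfold fermiSwap; noncomm_ring
    _ = d j - d (Equiv.swap a b j) := by
        rw [hcd, hcd, hdd, hdd, sub_self, zero_mul, sub_zero, sub_mul_ite_sub_ite hab]

theorem fermiSwap_mul_mul_fermiSwap [IsAddTorsionFree R]
    (hcd : ∀ i j, c i * d j + d j * c i = if i = j then 1 else 0)
    (hdd : ∀ i j, d i * d j + d j * d i = 0) (hab : a ≠ b) (j : ι) :
    fermiSwap c d a b * d j * fermiSwap c d a b = d (Equiv.swap a b j) := by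
  have hcomm := mul_fermiSwap_sub_fermiSwap_mul hcd hdd hab j
  have hflip :
      fermiSwap c d a b * (d j - d (Equiv.swap a b j)) = -(d j - d (Equiv.swap a b j)) := by
    rw [← sub_mul_ite_sub_ite hab, ← mul_assoc, fermiSwap_mul_sub hcd hdd hab, neg_mul]
  calc fermiSwap c d a b * d j * fermiSwap c d a b
      = fermiSwap c d a b * (fermiSwap c d a b * d j + (d j - d (Equiv.swap a b j))) := by
        rw [mul_assoc, ← hcomm, add_sub_cancel]
    _ = d (Equiv.swap a b j) := by
        rw [mul_add, ← mul_assoc, fermiSwap_mul_self hcd hdd hab, one_mul, hflip]; abel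

end FermiSwap

section InvolutionExp

open Nat

variable {𝔸 : Type*} [Ring 𝔸] [Algebra ℂ 𝔸] [TopologicalSpace 𝔸] [IsTopologicalRing 𝔸]
  [ContinuousSMul ℂ 𝔸] [T2Space 𝔸] {P : 𝔸}

theorem exp_I_mul_smul_of_mul_self_eq_one (hP : P * P = 1) (z : ℂ) :
    NormedSpace.exp ((Complex.I * z) • P) =
      Complex.cos z • 1 + (Complex.I * Complex.sin z) • P := by
  have hpow : ∀ k : ℕ, P ^ (2 * k) = 1 := fun k => by rw [pow_mul, sq, hP, one_pow]
  have heven : HasSum (fun k : ℕ => ((2 * k)! : ℂ)⁻¹ • ((Complex.I * z) • P) ^ (2 * k))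
      (Complex.cos z • 1) := by
    refine ((Complex.hasSum_cos' z).smul_const (1 : 𝔸)).congr_fun fun k => ?_
    rw [smul_pow, hpow, smul_smul, mul_comm z, div_eq_inv_mul]
  have hodd : HasSum (fun k : ℕ => ((2 * k + 1)! : ℂ)⁻¹ • ((Complex.I * z) • P) ^ (2 * k + 1))
      ((Complex.I * Complex.sin z) • P) := by
    refine (((Complex.hasSum_sin' z).mul_left Complex.I).smul_const P).congr_fun fun k => ?_
    rw [smul_pow, pow_succ P, hpow, one_mul, smul_smul, mul_comm z,
      mul_div_cancel₀ _ Complex.I_ne_zero, div_eq_inv_mul]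
  rw [NormedSpace.exp_eq_tsum ℂ]
  exact (heven.even_add_odd (f := fun n => (n ! : ℂ)⁻¹ • ((Complex.I * z) • P) ^ n) hodd).tsum_eq

theorem exp_neg_smul_mul_mul_exp_smul_of_mul_self_eq_one {X Y : 𝔸} (hP : P * P = 1)
    (hcomm : X * P - P * X = X - Y) (hconj : P * X * P = Y) (θ : ℂ) :
    NormedSpace.exp ((-(Complex.I * θ)) • P) * X * NormedSpace.exp ((Complex.I * θ) • P) =
      Complex.exp (Complex.I * θ) • (Complex.cos θ • X - (Complex.I * Complex.sin θ) • Y) := by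
  have hXP : X * P = P * X + (X - Y) := by rw [← hcomm]; abel
  rw [← mul_neg, exp_I_mul_smul_of_mul_self_eq_one hP, exp_I_mul_smul_of_mul_self_eq_one hP,
    Complex.cos_neg, Complex.sin_neg, mul_comm Complex.I θ, Complex.exp_mul_I]
  simp only [add_mul, mul_add, smul_mul_assoc, mul_smul_comm, one_mul, mul_one, hconj, hXP]
  match_scalars <;> ring

end InvolutionExp

/-- For the fermionic swap `P^f_{ab}`, one has
`e^{−iθ P^f_{ab}} c_j† e^{iθ P^f_{ab}} = e^{iθ}(cos θ · c_j† − i sin θ · c_{σ_{ab}(j)}†)`. -/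
theorem fermiSwap_exp_conjugation (n : ℕ)
    (c : Fin n → Matrix (Fin n → Bool) (Fin n → Bool) ℂ)
    (hCAR1 : ∀ i j, c i * (c j)ᴴ + (c j)ᴴ * c i =
      if i = j then (1 : Matrix (Fin n → Bool) (Fin n → Bool) ℂ) else 0)
    (hCAR2 : ∀ i j, (c i)ᴴ * (c j)ᴴ + (c j)ᴴ * (c i)ᴴ = 0)
    (a b : Fin n) (hab : a ≠ b)
    (P : Matrix (Fin n → Bool) (Fin n → Bool) ℂ)
    (hP : P = 1 - ((c a)ᴴ - (c b)ᴴ) * (c a - c b))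
    (θ : ℝ) (j : Fin n) :
    NormedSpace.exp ((-(Complex.I * (θ : ℂ))) • P) * (c j)ᴴ *
      NormedSpace.exp ((Complex.I * (θ : ℂ)) • P) =
    Complex.exp (Complex.I * (θ : ℂ)) •
      (Complex.cos (θ : ℂ) • (c j)ᴴ -
        (Complex.I * Complex.sin (θ : ℂ)) • (c (Equiv.swap a b j))ᴴ) := by
  have : IsAddTorsionFree (Matrix (Fin n → Bool) (Fin n → Bool) ℂ) := .of_module_rat _
  subst hP
  exact exp_neg_smul_mul_mul_exp_smul_of_mul_self_eq_one (fermiSwap_mul_self hCAR1 hCAR2 hab)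
    (mul_fermiSwap_sub_fermiSwap_mul hCAR1 hCAR2 hab j)
    (fermiSwap_mul_mul_fermiSwap hCAR1 hCAR2 hab j) θ
end

section
/- The commutator of a fermionic creation operator with the fermionic swap is [c_j†, P^f_{ab}] = c_j† − c_{σ_{ab}(j)}†. -/
open Matrix

/-- The commutator of a creation operator with the fermionic swap:
`[c_j†, P^f_{ab}] = c_j† − c_{σ_{ab}(j)}†`. -/
theorem fermiSwap_commutator (n : ℕ)
    (c : Fin n → Matrix (Fin n → Bool) (Fin n → Bool) ℂ)
    (hCAR1 : ∀ i j, c i * (c j)ᴴ + (c j)ᴴ * c i =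
      if i = j then (1 : Matrix (Fin n → Bool) (Fin n → Bool) ℂ) else 0)
    (hCAR2 : ∀ i j, (c i)ᴴ * (c j)ᴴ + (c j)ᴴ * (c i)ᴴ = 0)
    (a b : Fin n) (hab : a ≠ b)
    (P : Matrix (Fin n → Bool) (Fin n → Bool) ℂ)
    (hP : P = 1 - ((c a)ᴴ - (c b)ᴴ) * (c a - c b))
    (j : Fin n) :
    (c j)ᴴ * P - P * (c j)ᴴ = (c j)ᴴ - (c (Equiv.swap a b j))ᴴ := by
  have hanti : ∀ i k : Fin n, (c i)ᴴ * (c k)ᴴ = -((c k)ᴴ * (c i)ᴴ) :=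
    fun i k => eq_neg_of_add_eq_zero_left (hCAR2 i k)
  have hmix : ∀ i k : Fin n, c i * (c k)ᴴ =
      (if i = k then (1 : Matrix (Fin n → Bool) (Fin n → Bool) ℂ) else 0) - (c k)ᴴ * c i :=
    fun i k => eq_sub_of_add_eq (hCAR1 i k)
  subst hP
  set A := (c a)ᴴ with hA
  set B := (c b)ᴴ with hB
  set J := (c j)ᴴ with hJ
  have hJd : J * (A - B) = -((A - B) * J) := by
    rw [mul_sub, sub_mul, hanti j a, hanti j b]
    noncomm_ring
  have hed : (c a - c b) * J =
      ((if a = j then (1 : Matrix (Fin n → Bool) (Fin n → Bool) ℂ) else 0) -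
        (if b = j then 1 else 0)) - J * (c a - c b) := by
    rw [sub_mul, mul_sub, hmix a j, hmix b j]
    noncomm_ring
  have key : J * (1 - (A - B) * (c a - c b)) - (1 - (A - B) * (c a - c b)) * J
      = (A - B) * ((if a = j then (1 : Matrix (Fin n → Bool) (Fin n → Bool) ℂ) else 0) -
        (if b = j then 1 else 0)) := by
    have h1 : J * ((A - B) * (c a - c b)) = -((A - B) * J) * (c a - c b) := by
      rw [← mul_assoc, hJd]
    have h2 : (A - B) * (c a - c b) * J =
        (A - B) * (((if a = j then (1 : Matrix (Fin n → Bool) (Fin n → Bool) ℂ) else 0) -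
          (if b = j then 1 else 0)) - J * (c a - c b)) := by
      rw [mul_assoc, hed]
    have h3 : J * (1 - (A - B) * (c a - c b)) - (1 - (A - B) * (c a - c b)) * J
        = (A - B) * (c a - c b) * J - J * ((A - B) * (c a - c b)) := by noncomm_ring
    rw [h3, h1, h2]
    noncomm_ring
  rw [key]
  rcases eq_or_ne j a with rfl | hja
  · rw [if_pos rfl, if_neg (fun h => hab h.symm), Equiv.swap_apply_left]
    noncomm_ring
  · rcases eq_or_ne j b with rfl | hjb
    · rw [if_neg (fun h => hab h), if_pos rfl, Equiv.swap_apply_right]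
      noncomm_ring
    · rw [if_neg (fun h => hja h.symm), if_neg (fun h => hjb h.symm),
        Equiv.swap_apply_of_ne_of_ne hja hjb]
      noncomm_ring
end
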